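/- arXiv:2007.01209 — 5 statements merged into one kernel-verified Lean document; each statement's English description precedes it below -/
import Mathlib

section
/- Let k be a positive integer, let x, y, z be integers with x^3 + y^3 + z^3 = k, |x| > |y| > |z|, and |z| > √k. Then 0 < |x + y| < (2^(1/3) - 1)·|z|. -/
/-! Since `|z| > √k`, we have `|x ^ 3 + y ^ 3| = |k - z ^ 3| < |z| ^ 3 + |z| ^ 2`, which is less than
`|y| ^ 3`; hence `x` and `y` have opposite signs, `d = |x + y| = |x| - |y| > 0` and
`|x| ^ 3 - |y| ^ 3 < |z| ^ 3 + |z| ^ 2`. As `|x| ^ 3 - |y| ^ 3 = (|y| + d) ^ 3 - |y| ^ 3` grows with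
`|y| > |z|`, this forces `(|z| + d) ^ 3 < 2 |z| ^ 3`, i.e. `|z| + d < 2 ^ (1/3) |z|`. -/

section OrderedRing

variable {R : Type*} [CommRing R] [LinearOrder R] [IsStrictOrderedRing R]

theorem abs_add_eq_abs_sub_abs_of_mul_neg {a b : R} (hab : a * b < 0) (h : |b| ≤ |a|) :
    |a + b| = |a| - |b| := by
  rcases le_total 0 a with ha | ha <;> rcases le_total 0 b with hb | hb
  · exact absurd hab (mul_nonneg ha hb).not_gt
  · rw [abs_of_nonneg ha, abs_of_nonpos hb] at h ⊢
    rw [abs_of_nonneg (by linarith)]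
    ring
  · rw [abs_of_nonpos ha, abs_of_nonneg hb] at h ⊢
    rw [abs_of_nonpos (by linarith)]
    ring
  · exact absurd hab (mul_nonneg_of_nonpos_of_nonpos ha hb).not_gt

theorem abs_pow_three_add_pow_three_of_mul_neg {a b : R} (hab : a * b < 0) (h : |b| ≤ |a|) :
    |a ^ 3 + b ^ 3| = |a| ^ 3 - |b| ^ 3 := by
  rw [abs_add_eq_abs_sub_abs_of_mul_neg, abs_pow, abs_pow]
  · rw [← mul_pow]
    exact Odd.pow_neg (by decide) hab
  · rw [abs_pow, abs_pow]
    exact pow_le_pow_left₀ (abs_nonneg b) h 3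

theorem abs_pow_three_add_pow_three_of_mul_nonneg {a b : R} (hab : 0 ≤ a * b) :
    |a ^ 3 + b ^ 3| = |a| ^ 3 + |b| ^ 3 := by
  have hodd : Odd 3 := by decide
  rw [← abs_pow, ← abs_pow, abs_add_eq_add_abs_iff, hodd.pow_nonneg_iff, hodd.pow_nonneg_iff,
    hodd.pow_nonpos_iff, hodd.pow_nonpos_iff]
  exact mul_nonneg_iff.mp hab

theorem abs_pow_three_add_pow_three_lt {k x y z : R} (h : x ^ 3 + y ^ 3 + z ^ 3 = k)
    (hk : 0 < k) (hkz : k < z ^ 2) : |x ^ 3 + y ^ 3| < |z| ^ 3 + |z| ^ 2 := by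
  calc |x ^ 3 + y ^ 3| = |k + -z ^ 3| := by rw [← h]; ring_nf
    _ ≤ |k| + |-z ^ 3| := abs_add_le _ _
    _ < |z| ^ 3 + |z| ^ 2 := by
      rw [abs_neg, abs_pow, abs_of_pos hk, sq_abs]; linarith

theorem add_pow_three_lt_two_mul_pow_three {b c d : R} (hc : 0 ≤ c) (hd : 0 ≤ d)
    (hb : c + 1 ≤ b) (h : (b + d) ^ 3 - b ^ 3 < c ^ 3 + c ^ 2) : (c + d) ^ 3 < 2 * c ^ 3 := by
  have hmono : (c + 1 + d) ^ 3 - (c + 1) ^ 3 ≤ (b + d) ^ 3 - b ^ 3 := by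
    nlinarith [mul_nonneg hd (mul_nonneg (sub_nonneg.2 hb) (by linarith : 0 ≤ b + c + 1 + d))]
  -- Now `(c + d) ^ 3 < 2 * c ^ 3 + c ^ 2 - 6 * c * d - 3 * d ^ 2 - 3 * d`: either `6 * d` absorbs
  -- the `c ^ 2`, or `d < c / 6` and `(7 / 6) ^ 3 < 2`.
  rcases le_or_gt c (6 * d) with hcd | hcd
  · nlinarith [mul_le_mul_of_nonneg_left hcd hc]
  · have : (6 * (c + d)) ^ 3 ≤ (7 * c) ^ 3 := pow_le_pow_left₀ (by linarith) (by linarith) 3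
    nlinarith [pow_pos (hd.trans_lt (by linarith : d < c)) 3]

end OrderedRing

theorem lt_two_rpow_third_sub_one_mul {c d : ℝ} (h : (c + d) ^ 3 < 2 * c ^ 3) :
    d < ((2 : ℝ) ^ ((1 : ℝ) / 3) - 1) * c := by
  have hcube : ((2 : ℝ) ^ ((1 : ℝ) / 3) * c) ^ 3 = 2 * c ^ 3 := by
    rw [mul_pow, ← Real.rpow_natCast, ← Real.rpow_mul (by norm_num)]
    norm_num
  have := (Odd.strictMono_pow (R := ℝ) (by decide : Odd 3)).lt_iff_lt.mp (h.trans_eq hcube.symm)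
  linarith

theorem d_lt_alpha_z (k : ℤ) (hk : 0 < k) (x y z : ℤ)
    (h : x ^ 3 + y ^ 3 + z ^ 3 = k)
    (hxy : |x| > |y|) (hyz : |y| > |z|)
    (hz : Real.sqrt k < |(z : ℝ)|) :
    0 < |x + y| ∧ (|x + y| : ℝ) < ((2 : ℝ) ^ ((1 : ℝ) / 3) - 1) * |(z : ℝ)| := by
  have hkz : k < z ^ 2 := by
    have := (Real.sqrt_lt' ((Real.sqrt_nonneg _).trans_lt hz)).1 hz
    rw [sq_abs] at this
    exact_mod_cast this
  have hsum := abs_pow_three_add_pow_three_lt h hk hkz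
  have hzy : |z| + 1 ≤ |y| := hyz
  have hxy_neg : x * y < 0 := by
    by_contra! hxy_nonneg
    rw [abs_pow_three_add_pow_three_of_mul_nonneg hxy_nonneg] at hsum
    have : (|z| + 1) ^ 3 ≤ |y| ^ 3 := pow_le_pow_left₀ (by positivity) hzy 3
    nlinarith [pow_nonneg (abs_nonneg x) 3, abs_nonneg z]
  have hd := abs_add_eq_abs_sub_abs_of_mul_neg hxy_neg hxy.le
  refine ⟨by omega, ?_⟩
  have key : (|z| + |x + y|) ^ 3 < 2 * |z| ^ 3 := by
    refine add_pow_three_lt_two_mul_pow_three (abs_nonneg z) (abs_nonneg _) hzy ?_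
    rw [hd, add_sub_cancel, ← abs_pow_three_add_pow_three_of_mul_neg hxy_neg hxy.le]
    exact hsum
  exact lt_two_rpow_third_sub_one_mul (by exact_mod_cast key)
end

section
/- The improper integral ∫_1^∞ (t^3 + 1)^(-2/3) dt converges and equals (1/6)·Γ(1/3)^2 / Γ(2/3). -/
/-!
The substitution `u = 1 / (t ^ n + 1)` maps `(1, ∞)` onto `(0, 1/2)` and turns
`(t ^ n + 1) ^ (-s)` into `n⁻¹ · u ^ (s - 1/n - 1) (1 - u) ^ (1/n - 1)`. For `s = 2/n` this is the
Beta kernel with both parameters `1/n`, which is symmetric under `u ↦ 1 - u`; so the integral over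
`(0, 1/2)` is half of `B(1/n, 1/n) = Γ(1/n)² / Γ(2/n)`.
-/

open MeasureTheory Real Set

section Beta

variable {a b : ℝ}

lemma eqOn_cpow_mul_one_sub_cpow_ofReal :
    EqOn (fun x : ℝ => (x : ℂ) ^ ((a : ℂ) - 1) * (1 - (x : ℂ)) ^ ((b : ℂ) - 1))
      (fun x : ℝ => ((x ^ (a - 1) * (1 - x) ^ (b - 1) : ℝ) : ℂ)) (uIcc 0 1) := by
  intro x hx
  rw [uIcc_of_le zero_le_one] at hx
  push_cast [Complex.ofReal_cpow hx.1, Complex.ofReal_cpow (sub_nonneg.2 hx.2)]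
  rfl

theorem intervalIntegrable_rpow_mul_one_sub_rpow (ha : 0 < a) (hb : 0 < b) :
    IntervalIntegrable (fun x : ℝ => x ^ (a - 1) * (1 - x) ^ (b - 1)) volume 0 1 := by
  have h := (Complex.betaIntegral_convergent (u := a) (v := b) (by simpa) (by simpa)).congr
    (eqOn_cpow_mul_one_sub_cpow_ofReal.mono uIoc_subset_uIcc)
  exact (intervalIntegrable_iff_integrableOn_Ioc_of_le zero_le_one).2
    (by simpa [IntegrableOn] using h.1.re)

theorem integral_rpow_mul_one_sub_rpow (ha : 0 < a) (hb : 0 < b) :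
    ∫ x in (0 : ℝ)..1, x ^ (a - 1) * (1 - x) ^ (b - 1) = Gamma a * Gamma b / Gamma (a + b) := by
  have h := Complex.Gamma_mul_Gamma_eq_betaIntegral (s := a) (t := b) (by simpa) (by simpa)
  rw [Complex.betaIntegral, intervalIntegral.integral_congr eqOn_cpow_mul_one_sub_cpow_ofReal,
    intervalIntegral.integral_ofReal, ← Complex.ofReal_add, Complex.Gamma_ofReal,
    Complex.Gamma_ofReal, Complex.Gamma_ofReal] at h
  rw [eq_div_iff (Gamma_pos_of_pos (add_pos ha hb)).ne', mul_comm]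
  exact_mod_cast h.symm

end Beta

theorem integral_eq_two_mul_integral_half_of_symm {f : ℝ → ℝ} {a b : ℝ}
    (hf : IntervalIntegrable f volume a b) (hsymm : ∀ x, f (a + b - x) = f x) :
    ∫ x in a..b, f x = 2 * ∫ x in a..(a + b) / 2, f x := by
  have hmid : (a + b) / 2 ∈ uIcc a b := by
    rcases le_total a b with h | h
    · exact mem_uIcc.2 (Or.inl ⟨by linarith, by linarith⟩)
    · exact mem_uIcc.2 (Or.inr ⟨by linarith, by linarith⟩)
  have hright : ∫ x in (a + b) / 2..b, f x = ∫ x in a..(a + b) / 2, f x := by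
    simpa only [hsymm, show a + b - b = a by ring, show a + b - (a + b) / 2 = (a + b) / 2 by ring]
      using intervalIntegral.integral_comp_sub_left (a := (a + b) / 2) (b := b) f (a + b)
  rw [← intervalIntegral.integral_add_adjacent_intervals
      (hf.mono_set (uIcc_subset_uIcc left_mem_uIcc hmid))
      (hf.mono_set (uIcc_subset_uIcc hmid right_mem_uIcc)), hright, two_mul]

section ChangeOfVariables

variable {n : ℕ}

lemma hasDerivAt_inv_pow_add_one (n : ℕ) {t : ℝ} (ht : 0 ≤ t) :
    HasDerivAt (fun t : ℝ => (t ^ n + 1)⁻¹) (-(n * t ^ (n - 1)) / (t ^ n + 1) ^ 2) t :=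
  ((hasDerivAt_pow n t).add_const 1).inv (by positivity)

lemma injOn_inv_pow_add_one (hn : n ≠ 0) : InjOn (fun t : ℝ => (t ^ n + 1)⁻¹) (Ioi 0) := by
  intro x hx y hy hxy
  exact (pow_left_strictMonoOn₀ hn).injOn (le_of_lt hx) (le_of_lt hy) (by simpa using hxy)

lemma image_inv_pow_add_one_Ioi_one (hn : n ≠ 0) :
    (fun t : ℝ => (t ^ n + 1)⁻¹) '' Ioi 1 = Ioo 0 (1 / 2) := by
  ext u
  constructor
  · rintro ⟨t, ht, rfl⟩
    have htn : 1 < t ^ n := one_lt_pow₀ ht hn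
    refine ⟨by positivity, ?_⟩
    rw [one_div]
    exact inv_strictAnti₀ two_pos (by linarith)
  · rintro ⟨hu0, hu1⟩
    have hc : 1 < u⁻¹ - 1 := by
      have : 2 < u⁻¹ := by rw [lt_inv_comm₀ two_pos hu0]; linarith
      linarith
    refine ⟨(u⁻¹ - 1) ^ ((n : ℝ)⁻¹), one_lt_rpow hc (by positivity), ?_⟩
    simp only [rpow_inv_natCast_pow (by linarith : (0 : ℝ) ≤ u⁻¹ - 1) hn, sub_add_cancel, inv_inv]

lemma abs_deriv_mul_betaIntegrand_inv_pow_add_one (hn : n ≠ 0) (s : ℝ) {t : ℝ} (ht : 0 < t) :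
    |-(n * t ^ (n - 1)) / (t ^ n + 1) ^ 2| *
        (((t ^ n + 1)⁻¹) ^ (s - (n : ℝ)⁻¹ - 1) * (1 - (t ^ n + 1)⁻¹) ^ ((n : ℝ)⁻¹ - 1)) =
      n * (t ^ n + 1) ^ (-s) := by
  set c := t ^ n + 1
  have hc : 0 < c := by positivity
  have h1 : 1 - c⁻¹ = t ^ n * c⁻¹ := by field_simp; ring
  have ht_pow : t ^ (n - 1) * (t ^ n) ^ ((n : ℝ)⁻¹ - 1) = 1 := by
    rw [← rpow_natCast_mul ht.le, ← rpow_natCast, ← rpow_add ht,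
      Nat.cast_sub (Nat.one_le_iff_ne_zero.2 hn)]
    field_simp
    simp
  have hc_pow : (c⁻¹) ^ (s - (n : ℝ)⁻¹ - 1) * (c⁻¹) ^ ((n : ℝ)⁻¹ - 1) = c ^ 2 * c ^ (-s) := by
    rw [← rpow_add (inv_pos.2 hc), inv_rpow hc.le, ← rpow_neg hc.le, ← rpow_natCast,
      ← rpow_add hc]
    ring_nf
  rw [h1, mul_rpow (by positivity) (by positivity), abs_div, abs_neg,
    abs_of_nonneg (by positivity), abs_of_nonneg (by positivity)]
  calc n * t ^ (n - 1) / c ^ 2 * (c⁻¹ ^ (s - (n : ℝ)⁻¹ - 1) *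
          ((t ^ n) ^ ((n : ℝ)⁻¹ - 1) * c⁻¹ ^ ((n : ℝ)⁻¹ - 1)))
      = n * (t ^ (n - 1) * (t ^ n) ^ ((n : ℝ)⁻¹ - 1)) *
          (c⁻¹ ^ (s - (n : ℝ)⁻¹ - 1) * c⁻¹ ^ ((n : ℝ)⁻¹ - 1)) / c ^ 2 := by ring
    _ = n * c ^ (-s) := by rw [ht_pow, hc_pow]; field_simp

lemma hasDerivWithinAt_inv_pow_add_one (n : ℕ) :
    ∀ t ∈ Ioi (1 : ℝ), HasDerivWithinAt (fun x : ℝ => (x ^ n + 1)⁻¹)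
      (-(n * t ^ (n - 1)) / (t ^ n + 1) ^ 2) (Ioi 1) t :=
  fun _ ht => (hasDerivAt_inv_pow_add_one n (zero_le_one.trans (le_of_lt ht))).hasDerivWithinAt

theorem integrableOn_Ioi_one_rpow_pow_add_one_iff (hn : n ≠ 0) (s : ℝ) :
    IntegrableOn (fun t : ℝ => (t ^ n + 1) ^ (-s)) (Ioi 1) ↔
      IntegrableOn (fun u : ℝ => u ^ (s - (n : ℝ)⁻¹ - 1) * (1 - u) ^ ((n : ℝ)⁻¹ - 1))
        (Ioo 0 (1 / 2)) := by
  rw [← image_inv_pow_add_one_Ioi_one hn, integrableOn_image_iff_integrableOn_abs_deriv_smul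
    measurableSet_Ioi (hasDerivWithinAt_inv_pow_add_one n)
    ((injOn_inv_pow_add_one hn).mono (Ioi_subset_Ioi zero_le_one))]
  simp only [smul_eq_mul]
  rw [integrableOn_congr_fun (fun t (ht : t ∈ Ioi 1) =>
    abs_deriv_mul_betaIntegrand_inv_pow_add_one hn s (zero_lt_one.trans ht)) measurableSet_Ioi]
  exact (integrable_const_mul_iff (isUnit_iff_ne_zero.2 (Nat.cast_ne_zero.2 hn)) _).symm

theorem integral_Ioi_one_rpow_pow_add_one (hn : n ≠ 0) (s : ℝ) :
    ∫ t in Ioi 1, (t ^ n + 1) ^ (-s) = (n : ℝ)⁻¹ *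
      ∫ u in Ioo 0 (1 / 2), u ^ (s - (n : ℝ)⁻¹ - 1) * (1 - u) ^ ((n : ℝ)⁻¹ - 1) := by
  rw [← image_inv_pow_add_one_Ioi_one hn, integral_image_eq_integral_abs_deriv_smul
    measurableSet_Ioi (hasDerivWithinAt_inv_pow_add_one n)
    ((injOn_inv_pow_add_one hn).mono (Ioi_subset_Ioi zero_le_one))]
  simp only [smul_eq_mul]
  rw [setIntegral_congr_fun measurableSet_Ioi (fun t (ht : t ∈ Ioi 1) =>
    abs_deriv_mul_betaIntegrand_inv_pow_add_one hn s (zero_lt_one.trans ht)),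
    integral_const_mul, inv_mul_cancel_left₀ (Nat.cast_ne_zero.2 hn)]

end ChangeOfVariables

theorem integral_Ioi_one_rpow_pow_add_one_neg_two_div {n : ℕ} (hn : n ≠ 0) :
    IntegrableOn (fun t : ℝ => (t ^ n + 1) ^ (-(2 / n : ℝ))) (Ioi 1) ∧
      ∫ t in Ioi 1, (t ^ n + 1) ^ (-(2 / n : ℝ)) =
        Gamma (n : ℝ)⁻¹ ^ 2 / (2 * n * Gamma (2 / n)) := by
  set a : ℝ := (n : ℝ)⁻¹ with ha_def
  have ha : 0 < a := by positivity
  have hexp : 2 / (n : ℝ) - a - 1 = a - 1 := by ring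
  have hk := intervalIntegrable_rpow_mul_one_sub_rpow ha ha
  have hhalf := integral_eq_two_mul_integral_half_of_symm hk (fun x => by simp [mul_comm])
  rw [integral_rpow_mul_one_sub_rpow ha ha, zero_add,
    intervalIntegral.integral_of_le (by norm_num), integral_Ioc_eq_integral_Ioo] at hhalf
  rw [integrableOn_Ioi_one_rpow_pow_add_one_iff hn, integral_Ioi_one_rpow_pow_add_one hn,
    ← ha_def, hexp]
  refine ⟨(hk.mono_set ?_).1.mono_set Ioo_subset_Ioc_self, ?_⟩
  · exact uIcc_subset_uIcc left_mem_uIcc (by norm_num [mem_uIcc])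
  · have hΓ : 0 < Gamma (2 / n) := Gamma_pos_of_pos (by positivity)
    have hna : a * n = 1 := inv_mul_cancel₀ (Nat.cast_ne_zero.2 hn)
    rw [show a + a = 2 / n by ring, div_eq_iff hΓ.ne'] at hhalf
    rw [eq_div_iff (by positivity), pow_two, hhalf]
    linear_combination
      (2 * Gamma (2 / n) * ∫ u in Ioo 0 (1 / 2), u ^ (a - 1) * (1 - u) ^ (a - 1)) * hna

open MeasureTheory Real in
theorem sigma_infinity_integral :
    IntegrableOn (fun t : ℝ => (t ^ 3 + 1) ^ (-(2 : ℝ) / 3)) (Set.Ici 1) ∧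
    ∫ t in Set.Ici (1 : ℝ), (t ^ 3 + 1) ^ (-(2 : ℝ) / 3) =
      (1 / 6) * Real.Gamma (1 / 3) ^ 2 / Real.Gamma (2 / 3) := by
  have h := integral_Ioi_one_rpow_pow_add_one_neg_two_div three_ne_zero
  rw [integrableOn_Ici_iff_integrableOn_Ioi, integral_Ici_eq_integral_Ioi,
    show -(2 : ℝ) / 3 = -(2 / (3 : ℕ)) by norm_num]
  exact ⟨h.1, h.2.trans (by norm_num; ring)⟩
end

section
/- For every real R ≥ 1, the integral K(R) := ∫_R^∞ (4r^3 - 1)^(-1/2) dr converges and satisfies K(R) = R^(-1/2) · Σ_{j=0}^∞ binomial(j - 1/2, j) / (1 + 6j) · (4R^3)^(-j). -/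
/-- The generalized binomial coefficient `x choose j` for real `x`. -/
noncomputable def genBinom (x : ℝ) (j : ℕ) : ℝ :=
  (∏ i ∈ Finset.range j, (x - i)) / (j.factorial : ℝ)

/-!
For `r > R ≥ 1` write `4r³ - 1 = 4r³ (1 - u)` with `u = (4r³)⁻¹ < 1` and expand `(1 - u)^(-1/2)`
by the binomial series: `(4r³ - 1)^(-1/2) = ∑ⱼ binom(j - 1/2, j) (4r³)^(-1/2 - j)`. The terms are
nonnegative and their sum is integrable on `(R, ∞)` (it is `O(r^(-3/2))`), so the series may be
integrated termwise, and `∫_R^∞ (4r³)^(-1/2 - j) dr = R^(-1/2) (4R³)^(-j) / (1 + 6j)`.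
-/

open MeasureTheory Set

theorem genBinom_eq_choose (x : ℝ) (j : ℕ) : genBinom x j = Ring.choose x j := by
  rw [Ring.choose_eq_smul, genBinom, smul_eq_mul, ← Polynomial.aeval_eq_smeval,
    Polynomial.aeval_def, ← Polynomial.eval_map, descPochhammer_map,
    descPochhammer_eval_eq_prod_range, inv_mul_eq_div]

theorem genBinom_nonneg {x : ℝ} {j : ℕ} (hx : (j : ℝ) - 1 ≤ x) : 0 ≤ genBinom x j := by
  refine div_nonneg (Finset.prod_nonneg fun i hi => ?_) (Nat.cast_nonneg _)
  have : (i : ℝ) + 1 ≤ j := by exact_mod_cast Finset.mem_range.mp hi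
  linarith

theorem hasSum_genBinom_mul_pow (a : ℝ) {u : ℝ} (hu : |u| < 1) :
    HasSum (fun j : ℕ => genBinom (a + j - 1) j * u ^ j) ((1 - u) ^ (-a)) := by
  have h := (Real.one_div_one_sub_rpow_hasFPowerSeriesOnBall_zero a).hasSum (y := u)
    (by simpa [enorm_eq_nnnorm, ← NNReal.coe_lt_coe] using hu)
  rw [Real.rpow_neg (by linarith [le_abs_self u]), ← one_div]
  simpa [FormalMultilinearSeries.ofScalars_apply_eq, genBinom_eq_choose, mul_comm] using h

theorem hasSum_genBinom_mul_rpow (a : ℝ) {x : ℝ} (hx : 1 < x) :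
    HasSum (fun j : ℕ => genBinom (a + j - 1) j * x ^ (-a - j)) ((x - 1) ^ (-a)) := by
  have hx0 : 0 < x := one_pos.trans hx
  have hu : |x⁻¹| < 1 := by rw [abs_inv, abs_of_pos hx0]; exact inv_lt_one_of_one_lt₀ hx
  have hsplit : x - 1 = x * (1 - x⁻¹) := by field_simp
  rw [hsplit, Real.mul_rpow hx0.le (by linarith [le_abs_self x⁻¹])]
  have hterm : ∀ j : ℕ, genBinom (a + j - 1) j * x ^ (-a - j)
      = x ^ (-a) * (genBinom (a + j - 1) j * x⁻¹ ^ j) := fun j => by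
    rw [Real.rpow_sub hx0, Real.rpow_natCast, inv_pow, div_eq_mul_inv]
    ring
  simpa only [hterm] using (hasSum_genBinom_mul_pow a hu).mul_left (x ^ (-a))

theorem integral_Ioi_const_mul_pow_rpow {b t R : ℝ} {n : ℕ} (hb : 0 ≤ b) (hR : 0 < R)
    (ht : n * t < -1) :
    ∫ r in Ioi R, (b * r ^ n) ^ t = R * (b * R ^ n) ^ t / (-1 - n * t) := by
  have hsplit : ∀ r : ℝ, 0 ≤ r → (b * r ^ n) ^ t = b ^ t * r ^ (n * t) := fun r hr => by
    rw [Real.mul_rpow hb (pow_nonneg hr n), Real.rpow_natCast_mul hr]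
  rw [setIntegral_congr_fun measurableSet_Ioi fun r hr => hsplit r (hR.trans hr).le,
    integral_const_mul, integral_Ioi_rpow_of_lt ht hR, hsplit R hR.le, Real.rpow_add_one hR.ne',
    show -1 - n * t = -(n * t + 1) by ring, div_neg]
  ring

theorem integrableOn_Ioi_four_mul_pow_three_sub_one_rpow {a R : ℝ} (ha : 1 / 3 < a)
    (hR : 1 ≤ R) : IntegrableOn (fun r : ℝ => (4 * r ^ 3 - 1) ^ (-a)) (Ioi R) := by
  have hR0 : 0 < R := one_pos.trans_le hR
  have h3a : ((3 : ℕ) : ℝ) * -a < -1 := by push_cast; linarith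
  refine (integrableOn_Ioi_rpow_of_lt h3a hR0).mono' ?_ ?_
  · exact (by fun_prop : Measurable fun r : ℝ => (4 * r ^ 3 - 1) ^ (-a)).aestronglyMeasurable
  · refine (ae_restrict_iff' measurableSet_Ioi).mpr (Filter.Eventually.of_forall fun r hRr => ?_)
    have hr : 1 ≤ r := hR.trans hRr.le
    have hr3 : 1 ≤ r ^ 3 := one_le_pow₀ hr
    rw [Real.norm_of_nonneg (Real.rpow_nonneg (by linarith) _),
      Real.rpow_natCast_mul (by linarith)]
    exact Real.rpow_le_rpow_of_nonpos (by linarith) (by linarith) (by linarith)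

theorem hasSum_integral_of_nonneg {α ι : Type*} [MeasurableSpace α] [Countable ι]
    {μ : Measure α} {F : ι → α → ℝ} {f : α → ℝ} (hF_meas : ∀ i, AEStronglyMeasurable (F i) μ)
    (hF_nonneg : ∀ i, 0 ≤ᵐ[μ] F i) (hf : Integrable f μ)
    (h_lim : ∀ᵐ a ∂μ, HasSum (fun i => F i a) (f a)) :
    HasSum (fun i => ∫ a, F i a ∂μ) (∫ a, f a ∂μ) :=
  hasSum_integral_of_dominated_convergence F hF_meas
    (fun i => (hF_nonneg i).mono fun _ ha => (Real.norm_of_nonneg ha).le)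
    (h_lim.mono fun _ ha => ha.summable) (hf.congr (h_lim.mono fun _ ha => ha.tsum_eq.symm))
    h_lim

theorem hasSum_integral_Ioi_four_mul_pow_three_sub_one_rpow {a R : ℝ} (ha : 1 / 3 < a)
    (hR : 1 ≤ R) :
    HasSum
      (fun j : ℕ => genBinom (a + j - 1) j * (R * (4 * R ^ 3) ^ (-a - j) / (3 * (a + j) - 1)))
      (∫ r in Ioi R, (4 * r ^ 3 - 1) ^ (-a)) := by
  have hR0 : 0 < R := one_pos.trans_le hR
  have hterm : ∀ j : ℕ, ∫ r in Ioi R, genBinom (a + j - 1) j * (4 * r ^ 3) ^ (-a - j)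
      = genBinom (a + j - 1) j * (R * (4 * R ^ 3) ^ (-a - j) / (3 * (a + j) - 1)) := fun j => by
    rw [integral_const_mul, integral_Ioi_const_mul_pow_rpow (by norm_num) hR0
      (by push_cast; linarith [j.cast_nonneg (α := ℝ)])]
    push_cast
    ring_nf
  simp_rw [← hterm]
  refine hasSum_integral_of_nonneg (fun j => ?_) (fun j => ?_)
    (integrableOn_Ioi_four_mul_pow_three_sub_one_rpow ha hR) ?_
  · exact (by fun_prop : Measurable fun r : ℝ =>
      genBinom (a + j - 1) j * (4 * r ^ 3) ^ (-a - j)).aestronglyMeasurable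
  · filter_upwards [ae_restrict_mem measurableSet_Ioi] with r hr
    have hr : 0 ≤ r := hR0.le.trans (le_of_lt hr)
    exact mul_nonneg (genBinom_nonneg (by linarith)) (Real.rpow_nonneg (by positivity) _)
  · filter_upwards [ae_restrict_mem measurableSet_Ioi] with r hr
    have hr3 : 1 ≤ r ^ 3 := one_le_pow₀ (hR.trans (le_of_lt hr))
    exact hasSum_genBinom_mul_rpow a (by linarith)

theorem mul_rpow_four_mul_pow_three_neg_half {R : ℝ} (hR : 0 < R) :
    R * (4 * R ^ 3) ^ (-(1 / 2) : ℝ) = R ^ (-(1 / 2) : ℝ) / 2 := by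
  have h4 : (4 : ℝ) ^ (-(1 / 2) : ℝ) = 1 / 2 := by
    rw [show (4 : ℝ) = 2 ^ (2 : ℝ) by norm_num, ← Real.rpow_mul (by norm_num)]
    norm_num
  rw [Real.mul_rpow (by norm_num) (by positivity), ← Real.rpow_natCast_mul hR.le, h4]
  calc R * (1 / 2 * R ^ ((3 : ℕ) * -(1 / 2) : ℝ)) = R ^ (1 + (3 : ℕ) * -(1 / 2) : ℝ) / 2 := by
        rw [Real.rpow_add hR, Real.rpow_one]; ring
    _ = R ^ (-(1 / 2) : ℝ) / 2 := by norm_num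

open MeasureTheory in
theorem K_series (R : ℝ) (hR : 1 ≤ R) :
    IntegrableOn (fun r : ℝ => (4 * r ^ 3 - 1) ^ (-(1 : ℝ) / 2)) (Set.Ici R) ∧
    ∫ r in Set.Ici R, (4 * r ^ 3 - 1) ^ (-(1 : ℝ) / 2) =
      R ^ (-(1 : ℝ) / 2) *
        ∑' j : ℕ, genBinom ((j : ℝ) - 1 / 2) j / (1 + 6 * (j : ℝ)) *
          (4 * R ^ 3) ^ (-(j : ℤ)) := by
  have hR0 : 0 < R := one_pos.trans_le hR
  have ha : (1 : ℝ) / 3 < 1 / 2 := by norm_num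
  simp only [neg_div]
  refine ⟨(integrableOn_Ici_iff_integrableOn_Ioi).mpr
    (integrableOn_Ioi_four_mul_pow_three_sub_one_rpow ha hR), ?_⟩
  rw [integral_Ici_eq_integral_Ioi,
    ← (hasSum_integral_Ioi_four_mul_pow_three_sub_one_rpow ha hR).tsum_eq, ← tsum_mul_left]
  refine tsum_congr fun j => ?_
  rw [Real.rpow_sub (by positivity), Real.rpow_natCast, zpow_neg, zpow_natCast,
    ← mul_div_assoc R, mul_rpow_four_mul_pow_three_neg_half hR0,
    show (1 / 2 : ℝ) + j - 1 = j - 1 / 2 by ring,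
    show 3 * (1 / 2 + j : ℝ) - 1 = (1 + 6 * j) / 2 by ring]
  field_simp
end

section
/- Let p be a prime with p ≡ 1 (mod 3). Then there exists a unique integer a with a ≡ 1 (mod 3) such that 4p = a^2 + 27 b^2 for some positive integer b. -/
/-!
Since `p ≡ 1 (mod 3)`, the field `𝔽_p` contains a cube root of unity `ζ ≠ 1`, so
`-3 = (2ζ + 1)²` is a square mod `p`, and Thue's pigeonhole argument turns a square root of `-3`
into `p = x² + 3y²`. One of `y`, `x - y`, `x + y` is divisible by `3`, which rewrites `4p` as
`a² + 27b²`; replacing `a` by `-a` if necessary gives `a ≡ 1 (mod 3)`.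
For uniqueness, two representations `(a, b)`, `(c, d)` satisfy `p ∣ (ad - bc)(ad + bc)`, while
`(ac + 27bd)² + 27(ad - bc)² = 16p²` makes `|ad - bc| < p`; so `ad = ±bc`, which forces `c = ±a`,
and the congruence condition excludes `c = -a`.
-/

lemma two_mul_add_one_sq_eq_neg_three_of_pow_three_eq_one {R : Type*} [CommRing R]
    [NoZeroDivisors R] {ζ : R} (h3 : ζ ^ 3 = 1) (h1 : ζ ≠ 1) : (2 * ζ + 1) ^ 2 = -3 := by
  have hζ : ζ ^ 2 + ζ + 1 = 0 := by
    have : (ζ - 1) * (ζ ^ 2 + ζ + 1) = 0 := by linear_combination h3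
    exact (mul_eq_zero.mp this).resolve_left (sub_ne_zero.mpr h1)
  linear_combination 4 * hζ

lemma FiniteField.isSquare_neg_three {F : Type*} [Field F] [Fintype F]
    (hF : Fintype.card F % 3 = 1) : IsSquare (-3 : F) := by
  classical
  have hdvd : 3 ∣ Fintype.card Fˣ := by rw [Fintype.card_units]; omega
  obtain ⟨ζ, hζ⟩ := exists_prime_orderOf_dvd_card 3 hdvd
  have h3 : (ζ : F) ^ 3 = 1 := by rw [← Units.val_pow_eq_pow_val, ← hζ, pow_orderOf_eq_one]; rfl
  have h1 : (ζ : F) ≠ 1 := fun h => by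
    rw [Units.val_eq_one.mp h, orderOf_one] at hζ
    omega
  exact ⟨2 * ζ + 1, by rw [← sq, two_mul_add_one_sq_eq_neg_three_of_pow_three_eq_one h3 h1]⟩

lemma ZMod.exists_intCast_eq_mul_intCast (m : ℕ) [NeZero m] (c : ZMod m) :
    ∃ x y : ℤ, (x ≠ 0 ∨ y ≠ 0) ∧ |x| ≤ m.sqrt ∧ |y| ≤ m.sqrt ∧ (x : ZMod m) = c * y := by
  set s := m.sqrt
  have hcard : (Finset.univ : Finset (ZMod m)).card <
      (Finset.range (s + 1) ×ˢ Finset.range (s + 1)).card := by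
    rw [Finset.card_univ, ZMod.card, Finset.card_product, Finset.card_range, ← sq]
    exact Nat.lt_succ_sqrt' m
  obtain ⟨⟨i₁, j₁⟩, hij₁, ⟨i₂, j₂⟩, hij₂, hne, heq⟩ :=
    Finset.exists_ne_map_eq_of_card_lt_of_maps_to hcard
      (f := fun ij => (ij.1 : ZMod m) - c * ij.2)
      (fun _ _ => Finset.mem_coe.mpr (Finset.mem_univ _))
  simp only [Finset.mem_product, Finset.mem_range] at hij₁ hij₂
  refine ⟨(i₁ : ℤ) - i₂, (j₁ : ℤ) - j₂, ?_, abs_le.mpr ⟨by omega, by omega⟩,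
    abs_le.mpr ⟨by omega, by omega⟩, ?_⟩
  · by_contra! h
    exact hne (Prod.ext (by omega) (by omega))
  · push_cast
    linear_combination heq

lemma sq_add_three_mul_sq_ne_two_mul_odd {x y n : ℤ} (hn : Odd n) :
    x ^ 2 + 3 * y ^ 2 ≠ 2 * n := by
  obtain ⟨k, rfl⟩ := hn
  intro h
  have key : ∀ u v : ZMod 4, u ^ 2 + 3 * v ^ 2 ≠ 2 := by decide
  apply key x y
  have := congrArg (Int.cast : ℤ → ZMod 4) h
  push_cast at this
  have h4 : (4 : ZMod 4) = 0 := rfl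
  linear_combination this + (k : ZMod 4) * h4

lemma exists_four_mul_eq_sq_add_27_mul_sq {x y : ℤ} (hx : ¬ 3 ∣ x) :
    ∃ a b : ℤ, 4 * (x ^ 2 + 3 * y ^ 2) = a ^ 2 + 27 * b ^ 2 := by
  have : 3 ∣ y ∨ 3 ∣ x - y ∨ 3 ∣ x + y := by
    rcases (show x % 3 = 1 ∨ x % 3 = 2 by omega) with h | h <;> omega
  rcases this with ⟨k, hk⟩ | ⟨k, hk⟩ | ⟨k, hk⟩
  · exact ⟨2 * x, 2 * k, by rw [hk]; ring⟩
  · exact ⟨x + 3 * y, k, by linear_combination 3 * (x - y + 3 * k) * hk⟩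
  · exact ⟨x - 3 * y, k, by linear_combination 3 * (x + y + 3 * k) * hk⟩

lemma Nat.Prime.exists_eq_sq_add_three_mul_sq {p : ℕ} (hp : p.Prime) (h3 : p % 3 = 1) :
    ∃ x y : ℤ, (p : ℤ) = x ^ 2 + 3 * y ^ 2 := by
  have := Fact.mk hp
  obtain ⟨c, hc⟩ := FiniteField.isSquare_neg_three (F := ZMod p) (by rwa [ZMod.card])
  obtain ⟨x, y, hxy₀, hx, hy, hxy⟩ := ZMod.exists_intCast_eq_mul_intCast p c
  have hsqrt : ((p.sqrt : ℕ) : ℤ) ^ 2 < p := by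
    exact_mod_cast (Nat.sqrt_le' p).lt_of_ne fun h =>
      hp.prime.not_isSquare ⟨p.sqrt, h.symm.trans (sq _)⟩
  have hx2 : x ^ 2 ≤ (p.sqrt : ℤ) ^ 2 := by
    rw [← sq_abs x]; exact pow_le_pow_left₀ (abs_nonneg x) hx 2
  have hy2 : y ^ 2 ≤ (p.sqrt : ℤ) ^ 2 := by
    rw [← sq_abs y]; exact pow_le_pow_left₀ (abs_nonneg y) hy 2
  obtain ⟨t, ht⟩ : (p : ℤ) ∣ x ^ 2 + 3 * y ^ 2 := by
    rw [← ZMod.intCast_zmod_eq_zero_iff_dvd]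
    push_cast
    linear_combination (x + c * y : ZMod p) * hxy - (y : ZMod p) ^ 2 * hc
  have hpos : 0 < x ^ 2 + 3 * y ^ 2 := by rcases hxy₀ with h | h <;> positivity
  have hp0 : (0 : ℤ) < p := by exact_mod_cast hp.pos
  have ht₀ : 0 < t := by nlinarith
  have ht₄ : t < 4 := by nlinarith
  rcases (show t = 1 ∨ t = 2 ∨ t = 3 by omega) with rfl | rfl | rfl
  · exact ⟨x, y, by linarith⟩
  · have hodd : Odd (p : ℤ) := by
      exact_mod_cast hp.eq_two_or_odd'.resolve_left (by omega)
    exact absurd (ht.trans (mul_comm _ _)) (sq_add_three_mul_sq_ne_two_mul_odd hodd)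
  · obtain ⟨k, rfl⟩ : (3 : ℤ) ∣ x :=
      Int.Prime.dvd_pow' (k := 2) Nat.prime_three ⟨p - y ^ 2, by push_cast; linarith⟩
    exact ⟨y, k, by linarith⟩

lemma Nat.Prime.exists_modEq_one_four_mul_eq_sq_add_27_mul_sq {p : ℕ} (hp : p.Prime)
    (h3 : p % 3 = 1) :
    ∃ a : ℤ, a ≡ 1 [ZMOD 3] ∧ ∃ b : ℤ, 0 < b ∧ 4 * (p : ℤ) = a ^ 2 + 27 * b ^ 2 := by
  obtain ⟨x, y, hxy⟩ := hp.exists_eq_sq_add_three_mul_sq h3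
  obtain ⟨a, b, hab⟩ := exists_four_mul_eq_sq_add_27_mul_sq (x := x) (y := y) <| by
    rintro ⟨k, rfl⟩
    have : (p : ℤ) = 3 * (3 * k ^ 2 + y ^ 2) := by rw [hxy]; ring
    omega
  rw [← hxy] at hab
  have hb : b ≠ 0 := by
    rintro rfl
    obtain ⟨k, rfl⟩ := (Int.even_pow' two_ne_zero).mp ⟨2 * p, by linarith⟩
    exact hp.prime.not_isSquare (Int.isSquare_natCast_iff.mp ⟨k, by linarith⟩)
  have ha : ¬ 3 ∣ a := by
    rintro ⟨k, rfl⟩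
    have : 4 * (p : ℤ) = 3 * (3 * k ^ 2 + 9 * b ^ 2) := by rw [hab]; ring
    omega
  rcases (show a % 3 = 1 ∨ a % 3 = 2 by omega) with h | h
  · exact ⟨a, h, |b|, abs_pos.mpr hb, by rwa [sq_abs]⟩
  · exact ⟨-a, by unfold Int.ModEq; omega, |b|, abs_pos.mpr hb, by rwa [sq_abs, neg_sq]⟩

lemma eq_of_four_mul_eq_sq_add_27_mul_sq_of_dvd {n a b c d : ℤ} (hb : 0 < b) (hd : 0 < d)
    (hab : 4 * n = a ^ 2 + 27 * b ^ 2) (hcd : 4 * n = c ^ 2 + 27 * d ^ 2)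
    (hdvd : n ∣ a * d - b * c) : a = c := by
  have hn : 0 < n := by nlinarith [sq_nonneg a]
  have hsmall : |a * d - b * c| < n := by
    have hid : (a * c + 27 * b * d) ^ 2 + 27 * (a * d - b * c) ^ 2 = 16 * n ^ 2 := by
      linear_combination (-c ^ 2 - 27 * d ^ 2) * hab - 4 * n * hcd
    exact abs_lt_of_sq_lt_sq (by nlinarith [sq_nonneg (a * c + 27 * b * d)]) hn.le
  have hcross : a * d = b * c := sub_eq_zero.mp (Int.eq_zero_of_abs_lt_dvd hdvd hsmall)
  have hdb : d = b := by
    have : 4 * n * d ^ 2 = 4 * n * b ^ 2 := by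
      linear_combination d ^ 2 * hab - b ^ 2 * hcd + (a * d + b * c) * hcross
    exact (pow_left_inj₀ hd.le hb.le two_ne_zero).mp (mul_left_cancel₀ (by positivity) this)
  subst hdb
  exact mul_right_cancel₀ hd.ne' (by linarith)

theorem four_p_eq_sq_add_27_sq (p : ℕ) (hp : p.Prime) (h3 : p % 3 = 1) :
    ∃! a : ℤ, a ≡ 1 [ZMOD 3] ∧
      ∃ b : ℤ, 0 < b ∧ 4 * (p : ℤ) = a ^ 2 + 27 * b ^ 2 := by
  obtain ⟨a, ha, b, hb, hab⟩ := hp.exists_modEq_one_four_mul_eq_sq_add_27_mul_sq h3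
  refine ⟨a, ⟨ha, b, hb, hab⟩, ?_⟩
  rintro c ⟨hc, d, hd, hcd⟩
  have hdvd : (p : ℤ) ∣ (c * b - d * a) * (c * b - d * -a) :=
    ⟨4 * (b ^ 2 - d ^ 2), by linear_combination d ^ 2 * hab - b ^ 2 * hcd⟩
  rcases (Nat.prime_iff_prime_int.mp hp).dvd_or_dvd hdvd with h | h
  · exact eq_of_four_mul_eq_sq_add_27_mul_sq_of_dvd hd hb hcd hab h
  · have hca : c = -a := eq_of_four_mul_eq_sq_add_27_mul_sq_of_dvd hd hb hcd (by rwa [neg_sq]) h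
    unfold Int.ModEq at ha hc
    omega
end

section
/- For real r > 4^(-1/3), let t(r) = (√(12 r^3 - 3) - 3) / (6r). Then (t(r)^3 + 1)^(-2/3) · t'(r) = √(3 / (4 r^3 - 1)) for all r > 4^(-1/3) with r ≠ 1 where the expressions are defined. -/
/-!
Write `s = √(12 r³ - 3)`, so that `s² = 12 r³ - 3`. Then `t(r)³ + 1` and `t'(r)` are rational
in `r` and `s`, and modulo `s² = 12 r³ - 3` one checks
`(t³ + 1)² = ((2 r³ + 1 + s) / (6 r²))³`, `t' = (2 r³ + 1 + s) / (2 r² s)` and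
`3 / (4 r³ - 1) = (3 / s)²`; the product `(t³ + 1)^(-2/3) · t'` is therefore `3 / s`.
-/

noncomputable def tOfR (r : ℝ) : ℝ := (Real.sqrt (12 * r ^ 3 - 3) - 3) / (6 * r)

open Real

lemma Real.rpow_two_div_three_eq_of_sq_eq_cube {a b : ℝ} (ha : 0 ≤ a) (hb : 0 ≤ b)
    (h : a ^ 2 = b ^ 3) : a ^ ((2 : ℝ) / 3) = b := by
  rw [div_eq_mul_inv, rpow_mul ha, rpow_two, h]
  exact pow_rpow_inv_natCast hb three_ne_zero

lemma one_lt_four_mul_cube_of_rpow_lt {r : ℝ} (hr : (4 : ℝ) ^ (-(1 : ℝ) / 3) < r) :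
    1 < 4 * r ^ 3 := by
  have h4 : (0 : ℝ) < 4 ^ (-(1 : ℝ) / 3) := rpow_pos_of_pos (by norm_num) _
  have hcube : ((4 : ℝ) ^ (-(1 : ℝ) / 3)) ^ 3 = 4⁻¹ := by
    rw [← rpow_natCast, ← rpow_mul (by norm_num)]
    norm_num
  have := pow_lt_pow_left₀ hr h4.le three_ne_zero
  rw [hcube] at this
  linarith

section

variable {r : ℝ} (hr : 1 < 4 * r ^ 3)
include hr

lemma pos_of_one_lt_four_mul_cube : 0 < r :=
  (Odd.pow_pos_iff (by decide)).mp (by linarith : 0 < r ^ 3)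

lemma sqrt_twelve_mul_cube_sub_three_pos : 0 < √(12 * r ^ 3 - 3) :=
  sqrt_pos.mpr (by linarith)

lemma sq_sqrt_twelve_mul_cube_sub_three : √(12 * r ^ 3 - 3) ^ 2 = 12 * r ^ 3 - 3 :=
  sq_sqrt (by linarith)

lemma hasDerivAt_tOfR :
    HasDerivAt tOfR
      ((2 * r ^ 3 + 1 + √(12 * r ^ 3 - 3)) / (2 * r ^ 2 * √(12 * r ^ 3 - 3))) r := by
  have hr0 := pos_of_one_lt_four_mul_cube hr
  have hs0 := sqrt_twelve_mul_cube_sub_three_pos hr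
  have hs2 := sq_sqrt_twelve_mul_cube_sub_three hr
  have hradicand : HasDerivAt (fun x : ℝ => 12 * x ^ 3 - 3) (12 * (3 * r ^ 2)) r := by
    simpa using ((hasDerivAt_pow 3 r).const_mul (12 : ℝ)).sub_const 3
  have hden : HasDerivAt (fun x : ℝ => 6 * x) 6 r := by
    simpa using (hasDerivAt_id r).const_mul (6 : ℝ)
  refine (((hradicand.sqrt (by linarith)).sub_const 3).div hden (by positivity)).congr_deriv ?_
  generalize √(12 * r ^ 3 - 3) = s at hs0 hs2 ⊢
  field_simp
  linear_combination -2 * hs2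

lemma tOfR_cube_add_one :
    tOfR r ^ 3 + 1 =
      (r ^ 3 * √(12 * r ^ 3 - 3) + 2 * √(12 * r ^ 3 - 3) + 9 * r ^ 3) / (18 * r ^ 3) := by
  have hr0 := pos_of_one_lt_four_mul_cube hr
  have hs2 := sq_sqrt_twelve_mul_cube_sub_three hr
  rw [tOfR]
  generalize √(12 * r ^ 3 - 3) = s at hs2 ⊢
  field_simp
  linear_combination 18 * (s - 9) * hs2

lemma tOfR_cube_add_one_rpow_two_div_three :
    (tOfR r ^ 3 + 1) ^ ((2 : ℝ) / 3) = (2 * r ^ 3 + 1 + √(12 * r ^ 3 - 3)) / (6 * r ^ 2) := by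
  have hr0 := pos_of_one_lt_four_mul_cube hr
  have hs0 := sqrt_twelve_mul_cube_sub_three_pos hr
  have hs2 := sq_sqrt_twelve_mul_cube_sub_three hr
  have hA := tOfR_cube_add_one hr
  apply rpow_two_div_three_eq_of_sq_eq_cube (by rw [hA]; positivity) (by positivity)
  rw [hA]
  generalize √(12 * r ^ 3 - 3) = s at hs0 hs2 ⊢
  field_simp
  linear_combination (216 * (r ^ 3 + 2) ^ 2 - 972 * (2 * r ^ 3 + 1) - 324 * s) * hs2

lemma sqrt_three_div_four_mul_cube_sub_one :
    √(3 / (4 * r ^ 3 - 1)) = 3 / √(12 * r ^ 3 - 3) := by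
  have hs0 := sqrt_twelve_mul_cube_sub_three_pos hr
  rw [← sqrt_sq (by positivity : 0 ≤ 3 / √(12 * r ^ 3 - 3)), div_pow,
    sq_sqrt_twelve_mul_cube_sub_three hr]
  congr 1
  rw [div_eq_div_iff (by linarith) (by linarith)]
  ring

end

theorem t_change_of_variables_general (r : ℝ)
    (hr : (4 : ℝ) ^ (-(1 : ℝ) / 3) < r) :
    (tOfR r ^ 3 + 1) ^ (-(2 : ℝ) / 3) * deriv tOfR r =
      Real.sqrt (3 / (4 * r ^ 3 - 1)) := by
  have hr3 := one_lt_four_mul_cube_of_rpow_lt hr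
  have hr0 := pos_of_one_lt_four_mul_cube hr3
  have hs0 := sqrt_twelve_mul_cube_sub_three_pos hr3
  rw [neg_div, rpow_neg (by rw [tOfR_cube_add_one hr3]; positivity),
    tOfR_cube_add_one_rpow_two_div_three hr3, (hasDerivAt_tOfR hr3).deriv,
    sqrt_three_div_four_mul_cube_sub_one hr3]
  generalize √(12 * r ^ 3 - 3) = s at hs0 ⊢
  field_simp
  ring

theorem t_change_of_variables (r : ℝ)
    (hr : (4 : ℝ) ^ (-(1 : ℝ) / 3) < r) (hr1 : r ≠ 1) :
    (tOfR r ^ 3 + 1) ^ (-(2 : ℝ) / 3) * deriv tOfR r =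
      Real.sqrt (3 / (4 * r ^ 3 - 1)) :=
  t_change_of_variables_general r hr
end
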